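/- arXiv:2501.11944 — 2 statements merged into one kernel-verified Lean document; each statement's English description precedes it below -/
import Mathlib

section
/- Let n ≥ 1 be a natural number and r ≥ 1 a real number. Then there exists a constant C > 0, depending only on n and r, such that for all real numbers c_1, c_2, ..., c_n, setting m = (1/n) ∑_{i=1}^n c_i, one has ∑_{i=1}^n |c_i − m|^r ≤ C ∑_{i=1}^{n−1} |c_{i+1} − c_i|^r. -/
/-- Generalised algebraic inequality (Lemma 2.1): for `n ≥ 1` reals with mean `m`,
`∑ |cᵢ - m|^r ≤ C ∑ |cᵢ₊₁ - cᵢ|^r` with `C` depending only on `n` and `r ≥ 1`. -/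
theorem stmt_0 (n : ℕ) (hn : 1 ≤ n) (r : ℝ) (hr : 1 ≤ r) :
    ∃ C : ℝ, 0 < C ∧ ∀ c : ℕ → ℝ,
      ∑ i ∈ Finset.range n, |c i - (1 / (n : ℝ)) * ∑ j ∈ Finset.range n, c j| ^ r ≤
        C * ∑ i ∈ Finset.range (n - 1), |c (i + 1) - c i| ^ r := by
  have hr0 : (0:ℝ) ≤ r := le_trans zero_le_one hr
  rcases eq_or_lt_of_le hn with h1 | h2
  · refine ⟨1, one_pos, fun c => ?_⟩
    subst h1
    simp [Real.zero_rpow (by linarith : r ≠ 0)]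
  · set N := n - 1 with hNdef
    have hN0 : 0 < N := by omega
    have hNpos : (0:ℝ) < N := by exact_mod_cast hN0
    refine ⟨(n:ℝ) * (N:ℝ) ^ (r-1), by positivity, fun c => ?_⟩
    set D := ∑ i ∈ Finset.range N, |c (i+1) - c i| with hD
    set S := ∑ i ∈ Finset.range N, |c (i+1) - c i| ^ r with hS
    have hD0 : 0 ≤ D := Finset.sum_nonneg fun i _ => abs_nonneg _
    have hS0 : 0 ≤ S := Finset.sum_nonneg fun i _ => Real.rpow_nonneg (abs_nonneg _) r
    have key : ∀ i j, i < n → j < n → |c i - c j| ≤ D := by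
      have h2' : ∀ i j, i ≤ j → j < n → |c j - c i| ≤ D := by
        intro i j hij hj
        have ht : c j - c i = ∑ k ∈ Finset.Ico i j, (c (k+1) - c k) := by
          rw [Finset.sum_Ico_eq_sub _ hij, Finset.sum_range_sub, Finset.sum_range_sub]
          ring
        rw [ht]
        calc |∑ k ∈ Finset.Ico i j, (c (k+1) - c k)|
            ≤ ∑ k ∈ Finset.Ico i j, |c (k+1) - c k| := Finset.abs_sum_le_sum_abs _ _
          _ ≤ D := Finset.sum_le_sum_of_subset_of_nonneg
              (by intro k hk; simp only [Finset.mem_Ico] at hk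
                  simp only [Finset.mem_range]; omega)
              (fun k _ _ => abs_nonneg _)
      intro i j hi hj
      rcases le_total i j with h | h
      · rw [abs_sub_comm]; exact h2' i j h hj
      · exact h2' j i h hi
    have hnne : (n:ℝ) ≠ 0 := by positivity
    have step2 : ∀ i ∈ Finset.range n,
        |c i - (1/(n:ℝ)) * ∑ j ∈ Finset.range n, c j| ≤ D := by
      intro i hi
      rw [Finset.mem_range] at hi
      have he : c i - (1/(n:ℝ)) * ∑ j ∈ Finset.range n, c j
           = (1/(n:ℝ)) * ∑ j ∈ Finset.range n, (c i - c j) := by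
        rw [Finset.sum_sub_distrib, Finset.sum_const, Finset.card_range]
        field_simp
        ring
      rw [he, abs_mul, abs_of_nonneg (by positivity : (0:ℝ) ≤ 1/(n:ℝ))]
      calc (1/(n:ℝ)) * |∑ j ∈ Finset.range n, (c i - c j)|
          ≤ (1/(n:ℝ)) * ∑ j ∈ Finset.range n, |c i - c j| := by
            gcongr
            exact Finset.abs_sum_le_sum_abs _ _
        _ ≤ (1/(n:ℝ)) * ∑ j ∈ Finset.range n, D := by
            gcongr with j hj
            exact key i j hi (Finset.mem_range.mp hj)
        _ = D := by
            rw [Finset.sum_const, Finset.card_range, nsmul_eq_mul]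
            field_simp
    have step4 : D ^ r ≤ (N:ℝ)^(r-1) * S := by
      have h := Real.rpow_arith_mean_le_arith_mean_rpow (Finset.range N)
        (fun _ => 1/(N:ℝ)) (fun k => |c (k+1) - c k|)
        (fun i _ => by positivity)
        (by rw [Finset.sum_const, Finset.card_range, nsmul_eq_mul]; field_simp)
        (fun i _ => abs_nonneg _) hr
      rw [← Finset.mul_sum, ← Finset.mul_sum, ← hD, ← hS,
        Real.mul_rpow (by positivity) hD0] at h
      have e1 : (N:ℝ)^r * (1/(N:ℝ))^r = 1 := by
        rw [← Real.mul_rpow (by positivity) (by positivity),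
          mul_one_div_cancel (ne_of_gt hNpos), Real.one_rpow]
      calc D ^ r = (N:ℝ)^r * ((1/(N:ℝ))^r * D^r) := by
            rw [← mul_assoc, e1, one_mul]
        _ ≤ (N:ℝ)^r * ((1/(N:ℝ)) * S) :=
            mul_le_mul_of_nonneg_left h (by positivity)
        _ = (N:ℝ)^(r-1) * S := by
            rw [Real.rpow_sub hNpos, Real.rpow_one]
            ring
    calc ∑ i ∈ Finset.range n, |c i - (1/(n:ℝ)) * ∑ j ∈ Finset.range n, c j| ^ r
        ≤ ∑ i ∈ Finset.range n, D^r :=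
          Finset.sum_le_sum (fun i hi =>
            Real.rpow_le_rpow (abs_nonneg _) (step2 i hi) hr0)
      _ = (n:ℝ) * D^r := by rw [Finset.sum_const, Finset.card_range, nsmul_eq_mul]
      _ ≤ (n:ℝ) * ((N:ℝ)^(r-1) * S) :=
          mul_le_mul_of_nonneg_left step4 (by positivity)
      _ = (n:ℝ) * (N:ℝ)^(r-1) * S := by ring
end

section
/- Let (Ω, μ) be a measure space with μ(Ω) < ∞, let E be a real normed vector space, let p > 1 and L ≥ 0 be real numbers, and let W : E → ℝ be a function satisfying |W(ξ_1) − W(ξ_2)| ≤ L (1 + ‖ξ_1‖^{p−1} + ‖ξ_2‖^{p−1}) ‖ξ_1 − ξ_2‖ for all ξ_1, ξ_2 ∈ E. Let f and (f_n)_{n∈ℕ} be strongly measurable functions from Ω to E with ∫_Ω ‖f‖^p dμ < ∞ and ∫_Ω ‖f_n‖^p dμ < ∞ for all n, and suppose that ∫_Ω ‖f_n − f‖^p dμ → 0 as n → ∞. Then ∫_Ω W(f_n) dμ → ∫_Ω W(f) dμ as n → ∞. -/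
/-!
Write `q = p / (p - 1)`. The growth condition and Hölder's inequality give
`‖W ∘ u - W ∘ v‖₁ ≤ L (‖1‖_q + ‖u‖_p ^ (p - 1) + ‖v‖_p ^ (p - 1)) ‖u - v‖_p`,
because `‖ ‖u‖ ^ (p - 1) ‖_q = ‖u‖_p ^ (p - 1)`. So `u ↦ ∫ W ∘ u` is Lipschitz on bounded
subsets of `Lᵖ`, and a sequence converging in `Lᵖ` is eventually bounded there.
-/
open MeasureTheory Filter

open scoped ENNReal Topology

def LipschitzWithPowerGrowth {E : Type*} [NormedAddCommGroup E] (L p : ℝ) (W : E → ℝ) : Prop :=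
  ∀ ξ₁ ξ₂ : E, |W ξ₁ - W ξ₂| ≤ L * (1 + ‖ξ₁‖ ^ (p - 1) + ‖ξ₂‖ ^ (p - 1)) * ‖ξ₁ - ξ₂‖

namespace LipschitzWithPowerGrowth

variable {Ω E : Type*} [MeasurableSpace Ω] {μ : Measure Ω} [NormedAddCommGroup E]
  {L p q : ℝ} {W : E → ℝ}

theorem continuous (hW : LipschitzWithPowerGrowth L p W) (hp : 1 ≤ p) : Continuous W := by
  refine continuous_iff_continuousAt.2 fun x => tendsto_iff_dist_tendsto_zero.2 ?_
  have hcont : Continuous fun ξ : E => L * (1 + ‖ξ‖ ^ (p - 1) + ‖x‖ ^ (p - 1)) * ‖ξ - x‖ := by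
    fun_prop (disch := linarith)
  refine squeeze_zero (fun _ => dist_nonneg) (fun ξ => hW ξ x) ?_
  simpa using hcont.tendsto x

theorem eLpNorm_norm_rpow_sub_one (hpq : p.HolderConjugate q) (u : Ω → E) :
    eLpNorm (fun ω => ‖u ω‖ ^ (p - 1)) (.ofReal q) μ = eLpNorm u (.ofReal p) μ ^ (p - 1) := by
  rw [eLpNorm_norm_rpow u (by linarith [hpq.lt]), ← ENNReal.ofReal_mul hpq.symm.nonneg,
    mul_comm, hpq.sub_one_mul_conj]

theorem eLpNorm_comp_sub_comp_le (hW : LipschitzWithPowerGrowth L p W) (hpq : p.HolderConjugate q)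
    {u v : Ω → E} (hu : AEStronglyMeasurable u μ) (hv : AEStronglyMeasurable v μ) :
    eLpNorm (fun ω => W (u ω) - W (v ω)) 1 μ ≤
      ‖L‖ₑ * (eLpNorm (1 : Ω → ℝ) (.ofReal q) μ + eLpNorm u (.ofReal p) μ ^ (p - 1) +
        eLpNorm v (.ofReal p) μ ^ (p - 1)) * eLpNorm (u - v) (.ofReal p) μ := by
  have hp₀ : 0 ≤ p - 1 := by linarith [hpq.lt]
  have hq : 1 ≤ ENNReal.ofReal q := by simpa using hpq.symm.lt.le
  have := hpq.symm.ennrealOfReal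
  set G : Ω → ℝ := fun ω => 1 + ‖u ω‖ ^ (p - 1) + ‖v ω‖ ^ (p - 1)
  have hG : eLpNorm G (.ofReal q) μ ≤ eLpNorm (1 : Ω → ℝ) (.ofReal q) μ +
      eLpNorm u (.ofReal p) μ ^ (p - 1) + eLpNorm v (.ofReal p) μ ^ (p - 1) := by
    have hpow {w : Ω → E} (hw : AEStronglyMeasurable w μ) :
        AEStronglyMeasurable (fun ω => ‖w ω‖ ^ (p - 1)) μ := by fun_prop (disch := exact hp₀)
    rw [← eLpNorm_norm_rpow_sub_one hpq u, ← eLpNorm_norm_rpow_sub_one hpq v]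
    refine (eLpNorm_add_le (aestronglyMeasurable_const.add (hpow hu)) (hpow hv) hq).trans ?_
    gcongr
    exact eLpNorm_add_le aestronglyMeasurable_const (hpow hu) hq
  calc eLpNorm (fun ω => W (u ω) - W (v ω)) 1 μ
      ≤ eLpNorm (fun ω => L * (G ω * ‖u ω - v ω‖)) 1 μ :=
        eLpNorm_mono_real fun ω => by simpa only [Real.norm_eq_abs, ← mul_assoc] using hW _ _
    _ = ‖L‖ₑ * eLpNorm (G • fun ω => ‖(u - v) ω‖) 1 μ := eLpNorm_const_smul L _ 1 μ
    _ ≤ ‖L‖ₑ * (eLpNorm G (.ofReal q) μ * eLpNorm (u - v) (.ofReal p) μ) := by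
        gcongr
        rw [← eLpNorm_norm (u - v)]
        exact eLpNorm_smul_le_mul_eLpNorm (hu.sub hv).norm (by fun_prop (disch := exact hp₀))
    _ ≤ _ := by rw [← mul_assoc]; gcongr

variable [IsFiniteMeasure μ]

theorem integrable_comp (hW : LipschitzWithPowerGrowth L p W) (hpq : p.HolderConjugate q)
    {u : Ω → E} (hu : MemLp u (.ofReal p) μ) : Integrable (fun ω => W (u ω)) μ := by
  have hp₀ : 0 ≤ p - 1 := by linarith [hpq.lt]
  have hsub : MemLp (fun ω => W (u ω) - W 0) 1 μ := by
    refine ⟨((hW.continuous hpq.lt.le).comp_aestronglyMeasurable hu.1).sub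
      aestronglyMeasurable_const, ?_⟩
    refine (hW.eLpNorm_comp_sub_comp_le hpq (v := 0) hu.1 aestronglyMeasurable_const).trans_lt ?_
    have h1 := (memLp_const (1 : ℝ) (p := .ofReal q) (μ := μ)).eLpNorm_lt_top
    have h2 := ENNReal.rpow_lt_top_of_nonneg hp₀ hu.eLpNorm_lt_top.ne
    simp only [sub_zero, eLpNorm_zero, ENNReal.zero_rpow_of_pos (sub_pos.2 hpq.lt)]
    finiteness
  exact ((memLp_one_iff_integrable.1 hsub).add (integrable_const (W 0))).congr
    (.of_forall fun _ => sub_add_cancel _ _)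

theorem enorm_integral_comp_sub_le (hW : LipschitzWithPowerGrowth L p W)
    (hpq : p.HolderConjugate q) {u v : Ω → E} (hu : MemLp u (.ofReal p) μ)
    (hv : MemLp v (.ofReal p) μ) :
    ‖∫ ω, W (u ω) ∂μ - ∫ ω, W (v ω) ∂μ‖ₑ ≤
      ‖L‖ₑ * (eLpNorm (1 : Ω → ℝ) (.ofReal q) μ + eLpNorm u (.ofReal p) μ ^ (p - 1) +
        eLpNorm v (.ofReal p) μ ^ (p - 1)) * eLpNorm (u - v) (.ofReal p) μ := by
  rw [← integral_sub (hW.integrable_comp hpq hu) (hW.integrable_comp hpq hv)]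
  refine (enorm_integral_le_lintegral_enorm _).trans ?_
  rw [← eLpNorm_one_eq_lintegral_enorm]
  exact hW.eLpNorm_comp_sub_comp_le hpq hu.1 hv.1

theorem tendsto_integral_comp (hW : LipschitzWithPowerGrowth L p W) (hp : 1 < p)
    {ι : Type*} {l : Filter ι} {u : ι → Ω → E} {v : Ω → E}
    (hu : ∀ i, MemLp (u i) (.ofReal p) μ) (hv : MemLp v (.ofReal p) μ)
    (huv : Tendsto (fun i => eLpNorm (u i - v) (.ofReal p) μ) l (𝓝 0)) :
    Tendsto (fun i => ∫ ω, W (u i ω) ∂μ) l (𝓝 (∫ ω, W (v ω) ∂μ)) := by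
  have hpq := Real.HolderConjugate.conjExponent hp
  have hp₀ : 0 ≤ p - 1 := by linarith
  have hp₁ : (1 : ℝ≥0∞) ≤ .ofReal p := by simpa using hp.le
  set a := eLpNorm v (.ofReal p) μ
  set K := ‖L‖ₑ *
    (eLpNorm (1 : Ω → ℝ) (.ofReal p.conjExponent) μ + (1 + a) ^ (p - 1) + a ^ (p - 1)) with hK_def
  have hK : K ≠ ∞ := by
    have h1 := (memLp_const (1 : ℝ) (p := .ofReal p.conjExponent) (μ := μ)).eLpNorm_lt_top
    have h2 := hv.eLpNorm_lt_top
    have h3 : (1 + a) ^ (p - 1) < ∞ := ENNReal.rpow_lt_top_of_nonneg hp₀ (by finiteness)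
    have h4 : a ^ (p - 1) < ∞ := ENNReal.rpow_lt_top_of_nonneg hp₀ h2.ne
    finiteness
  have hbound : ∀ᶠ i in l,
      edist (∫ ω, W (u i ω) ∂μ) (∫ ω, W (v ω) ∂μ) ≤ K * eLpNorm (u i - v) (.ofReal p) μ := by
    filter_upwards [huv.eventually (ge_mem_nhds zero_lt_one)] with i hi
    have hui : eLpNorm (u i) (.ofReal p) μ ≤ 1 + a := calc
      eLpNorm (u i) (.ofReal p) μ = eLpNorm (u i - v + v) (.ofReal p) μ := by rw [sub_add_cancel]
      _ ≤ eLpNorm (u i - v) (.ofReal p) μ + a := eLpNorm_add_le ((hu i).1.sub hv.1) hv.1 hp₁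
      _ ≤ 1 + a := by gcongr
    rw [edist_eq_enorm_sub]
    refine (hW.enorm_integral_comp_sub_le hpq (hu i) hv).trans ?_
    rw [hK_def]
    gcongr
  rw [tendsto_iff_edist_tendsto_0]
  refine tendsto_of_tendsto_of_tendsto_of_le_of_le' tendsto_const_nhds ?_
    (.of_forall fun _ => zero_le) hbound
  simpa using ENNReal.Tendsto.const_mul huv (Or.inr hK)

end LipschitzWithPowerGrowth

theorem stmt_7_general (Ω : Type*) [MeasurableSpace Ω] (μ : Measure Ω) [IsFiniteMeasure μ]
    (E : Type*) [NormedAddCommGroup E]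
    (p L : ℝ) (hp : 1 < p) (W : E → ℝ)
    (hW : ∀ ξ₁ ξ₂ : E, |W ξ₁ - W ξ₂| ≤ L * (1 + ‖ξ₁‖ ^ (p - 1) + ‖ξ₂‖ ^ (p - 1)) * ‖ξ₁ - ξ₂‖)
    (f : Ω → E) (fn : ℕ → Ω → E)
    (hf : StronglyMeasurable f) (hfn : ∀ n, StronglyMeasurable (fn n))
    (hfp : Integrable (fun ω => ‖f ω‖ ^ p) μ)
    (hfnp : ∀ n, Integrable (fun ω => ‖fn n ω‖ ^ p) μ)
    (hconv : Tendsto (fun n => ∫ ω, ‖fn n ω - f ω‖ ^ p ∂μ) atTop (nhds 0)) :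
    Tendsto (fun n => ∫ ω, W (fn n ω) ∂μ) atTop (nhds (∫ ω, W (f ω) ∂μ)) := by
  have hp₀ : 0 < p := by linarith
  have hp' : ENNReal.ofReal p ≠ 0 := by simpa using hp₀
  have memLp {g : Ω → E} (hg : StronglyMeasurable g) (hgp : Integrable (fun ω => ‖g ω‖ ^ p) μ) :
      MemLp g (.ofReal p) μ :=
    (integrable_norm_rpow_iff hg.aestronglyMeasurable hp' ENNReal.ofReal_ne_top).1
      (by rwa [ENNReal.toReal_ofReal hp₀.le])
  have hfLp := memLp hf hfp
  have hfnLp n := memLp (hfn n) (hfnp n)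
  have hdist : Tendsto (fun n => eLpNorm (fn n - f) (.ofReal p) μ) atTop (𝓝 0) := by
    have h := ENNReal.tendsto_ofReal (hconv.rpow_const (p := p⁻¹) (.inr (by positivity)))
    rw [Real.zero_rpow (by positivity), ENNReal.ofReal_zero] at h
    refine h.congr fun n => ?_
    rw [((hfnLp n).sub hfLp).eLpNorm_eq_integral_rpow_norm hp' ENNReal.ofReal_ne_top,
      ENNReal.toReal_ofReal hp₀.le]
    rfl
  exact LipschitzWithPowerGrowth.tendsto_integral_comp hW hp hfnLp hfLp hdist

/-- Continuity of the integral functional `u ↦ ∫ W(u)` with respect to strong `L^p`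
convergence, under the growth-continuity assumption on `W`. -/
theorem stmt_7 (Ω : Type*) [MeasurableSpace Ω] (μ : Measure Ω) [IsFiniteMeasure μ]
    (E : Type*) [NormedAddCommGroup E] [NormedSpace ℝ E]
    (p L : ℝ) (hp : 1 < p) (hL : 0 ≤ L) (W : E → ℝ)
    (hW : ∀ ξ₁ ξ₂ : E, |W ξ₁ - W ξ₂| ≤ L * (1 + ‖ξ₁‖ ^ (p - 1) + ‖ξ₂‖ ^ (p - 1)) * ‖ξ₁ - ξ₂‖)
    (f : Ω → E) (fn : ℕ → Ω → E)
    (hf : StronglyMeasurable f) (hfn : ∀ n, StronglyMeasurable (fn n))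
    (hfp : Integrable (fun ω => ‖f ω‖ ^ p) μ)
    (hfnp : ∀ n, Integrable (fun ω => ‖fn n ω‖ ^ p) μ)
    (hconv : Tendsto (fun n => ∫ ω, ‖fn n ω - f ω‖ ^ p ∂μ) atTop (nhds 0)) :
    Tendsto (fun n => ∫ ω, W (fn n ω) ∂μ) atTop (nhds (∫ ω, W (f ω) ∂μ)) :=
  stmt_7_general Ω μ E p L hp W hW f fn hf hfn hfp hfnp hconv
end
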